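/- arXiv:math/0702886 — 5 statements merged into one kernel-verified Lean document; each statement's English description precedes it below -/
import Mathlib

section
/- If u ∈ C²(ℝ) and w ∈ C¹(ℝ) with 0 ≤ u, w ≤ 1 satisfy the travelling-wave equations 0 = u'' + c u' - u + w - γk u(1-w) and 0 = c w' + k u(1-w) with c = 0, then either (u,w) ≡ (0,0) or (u,w) ≡ (1,1). -/
theorem stmt_3 (γ k : ℝ) (hγ : 0 < γ) (hk : 0 < k)
    (u w : ℝ → ℝ) (hu : ContDiff ℝ 2 u) (hw : ContDiff ℝ 1 w)
    (hu01 : ∀ x, 0 ≤ u x ∧ u x ≤ 1) (hw01 : ∀ x, 0 ≤ w x ∧ w x ≤ 1)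
    (heq1 : ∀ x, deriv (deriv u) x + (0:ℝ) * deriv u x - u x + w x
      - γ * k * u x * (1 - w x) = 0)
    (heq2 : ∀ x, (0:ℝ) * deriv w x + k * u x * (1 - w x) = 0) :
    (∀ x, u x = 0 ∧ w x = 0) ∨ (∀ x, u x = 1 ∧ w x = 1) := by
  have h1 : ∀ x, u x * (1 - w x) = 0 := by
    intro x
    have h : k * (u x * (1 - w x)) = 0 := by linear_combination heq2 x
    exact (mul_eq_zero.mp h).resolve_left hk.ne'
  have h2 : ∀ x, deriv (deriv u) x = u x - w x := by
    intro x
    linear_combination heq1 x + γ * k * h1 x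
  have h3 : ∀ x, deriv (deriv u) x ≤ 0 := by
    intro x
    rw [h2 x]
    rcases mul_eq_zero.mp (h1 x) with h | h
    · rw [h]; linarith [(hw01 x).1]
    · have hw1 : w x = 1 := by linarith
      rw [hw1]; linarith [(hu01 x).2]
  have hud : Differentiable ℝ u := hu.differentiable (by norm_num)
  have hu' : ContDiff ℝ 1 (deriv u) :=
    ((contDiff_succ_iff_deriv (n := 1)).mp (by norm_num; exact_mod_cast hu)).2.2
  have hu'd : Differentiable ℝ (deriv u) := hu'.differentiable one_ne_zero
  have hanti : Antitone (deriv u) := antitone_of_deriv_nonpos hu'd h3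
  -- deriv u vanishes everywhere
  have hd0 : ∀ x, deriv u x = 0 := by
    intro x0
    by_contra hne
    have hd : deriv u x0 = deriv u x0 := rfl
    set d := deriv u x0 with hdd
    have key : ∀ (y : ℝ), deriv (fun t => u t - d * t) y = deriv u y - d := by
      intro y
      have hlin : HasDerivAt (fun t : ℝ => d * t) d y := by
        simpa using (hasDerivAt_id y).const_mul d
      exact ((hud y).hasDerivAt.sub hlin).deriv
    rcases lt_or_gt_of_ne hne with hneg | hpos
    · -- d < 0 : u decreases at rate |d| on [x0, ∞)
      have hmono : AntitoneOn (fun t => u t - d * t) (Set.Ici x0) := by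
        apply antitoneOn_of_deriv_nonpos (convex_Ici x0)
          (Continuous.continuousOn (by fun_prop))
          (Differentiable.differentiableOn (by fun_prop))
        intro y hy
        rw [interior_Ici] at hy
        rw [key y]
        have : deriv u y ≤ d := hanti (le_of_lt hy)
        linarith
      have ht : (0:ℝ) < 2 / (-d) := div_pos two_pos (by linarith)
      have hx0y : x0 ≤ x0 + 2 / (-d) := by linarith
      have hest := hmono (Set.self_mem_Ici) (Set.mem_Ici.mpr hx0y) hx0y
      simp only at hest
      have hq : 2 / (-d) * (-d) = 2 := div_mul_cancel₀ 2 (by intro h; apply hne; linarith)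
      have hub := (hu01 x0).2
      have hlb := (hu01 (x0 + 2 / (-d))).1
      nlinarith [hest, hq]
    · -- d > 0 : u increases at rate d on (-∞, x0]
      have hmono : MonotoneOn (fun t => u t - d * t) (Set.Iic x0) := by
        apply monotoneOn_of_deriv_nonneg (convex_Iic x0)
          (Continuous.continuousOn (by fun_prop))
          (Differentiable.differentiableOn (by fun_prop))
        intro y hy
        rw [interior_Iic] at hy
        rw [key y]
        have : d ≤ deriv u y := hanti (le_of_lt hy)
        linarith
      have ht : (0:ℝ) < 2 / d := div_pos two_pos hpos
      have hx0y : x0 - 2 / d ≤ x0 := by linarith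
      have hest := hmono (Set.mem_Iic.mpr hx0y) (Set.self_mem_Iic) hx0y
      simp only at hest
      have hq : 2 / d * d = 2 := div_mul_cancel₀ 2 (by positivity)
      have hub := (hu01 x0).2
      have hlb := (hu01 (x0 - 2 / d)).1
      nlinarith [hest, hq]
  -- u is constant
  have hconst : ∀ x, u x = u 0 := fun x => is_const_of_deriv_eq_zero hud hd0 x 0
  have hderiv2 : ∀ x, deriv (deriv u) x = 0 := by
    intro x
    have : deriv u = fun _ => (0:ℝ) := funext hd0
    rw [this]
    simp
  have hwu : ∀ x, w x = u x := by
    intro x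
    have := h2 x
    rw [hderiv2 x] at this
    linarith
  have hu0 : u 0 * (1 - u 0) = 0 := by
    have := h1 0
    rw [hwu 0] at this
    exact this
  rcases mul_eq_zero.mp hu0 with h | h
  · left
    intro x
    rw [hconst x, hwu x, hconst x, h]
    exact ⟨rfl, rfl⟩
  · right
    intro x
    have : u 0 = 1 := by linarith
    rw [hconst x, hwu x, hconst x, this]
    exact ⟨rfl, rfl⟩
end

section
/- Let (c,u,w) be a monotone travelling wave for the reaction–diffusion system and let μ > 0 be the positive root of μ² + cμ - 1 = 0. Then u'(x) ≥ -μ(1 - u(x)) for all x ∈ ℝ. -/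
open Real Filter
open scoped ContDiff

/-- Auxiliary: exponential beats linear growth at `-∞`. -/
lemma stmt_5_aux (a C D : ℝ) (ha : 0 < a) :
    Tendsto (fun x => Real.exp (a*x) * (C + D * (-x))) atBot (nhds 0) := by
  have h1 : Tendsto (fun t:ℝ => Real.exp (-t) * (C + D * (t/a))) atTop (nhds 0) := by
    have hA := tendsto_exp_neg_atTop_nhds_zero.const_mul C
    have hB := (tendsto_pow_mul_exp_neg_atTop_nhds_zero 1).const_mul (D/a)
    have := hA.add hB
    simp only [mul_zero, add_zero] at this
    refine this.congr fun t => ?_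
    field_simp
  have h2 : Tendsto (fun x : ℝ => -(a*x)) atBot atTop := by
    have h3 := (tendsto_neg_atBot_atTop (G := ℝ)).const_mul_atTop ha
    refine h3.congr fun x => ?_
    ring
  have := h1.comp h2
  refine this.congr fun x => ?_
  simp only [Function.comp]
  rw [neg_neg]
  congr 1
  field_simp

theorem stmt_5 (γ k c : ℝ) (hγ : 0 < γ) (hk : 0 < k) (hc : 0 < c)
    (u w : ℝ → ℝ) (hu : ContDiff ℝ (⊤ : ℕ∞) u) (hw : ContDiff ℝ (⊤ : ℕ∞) w)
    (hu01 : ∀ x, 0 < u x ∧ u x < 1) (hw01 : ∀ x, 0 < w x ∧ w x < 1)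
    (hu' : ∀ x, deriv u x < 0) (hw' : ∀ x, deriv w x < 0)
    (huB : Filter.Tendsto u Filter.atBot (nhds 1)) (huT : Filter.Tendsto u Filter.atTop (nhds 0))
    (hwB : Filter.Tendsto w Filter.atBot (nhds 1)) (hwT : Filter.Tendsto w Filter.atTop (nhds 0))
    (heq1 : ∀ x, deriv (deriv u) x + c * deriv u x - u x + w x - γ * k * u x * (1 - w x) = 0)
    (heq2 : ∀ x, c * deriv w x + k * u x * (1 - w x) = 0)
    (μ : ℝ) (hμ : μ = -c/2 + Real.sqrt (c^2/4 + 1)) :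
    ∀ x, deriv u x ≥ -μ * (1 - u x) := by
  -- basic facts about μ
  have hμpos : 0 < μ := by
    have h2 : Real.sqrt (c^2/4) = c/2 := by
      rw [show c^2/4 = (c/2)^2 by ring, Real.sqrt_sq (by linarith)]
    have h1 : Real.sqrt (c^2/4) < Real.sqrt (c^2/4 + 1) :=
      Real.sqrt_lt_sqrt (by positivity) (by linarith)
    rw [hμ]; linarith
  have hμne : μ ≠ 0 := ne_of_gt hμpos
  have hμeq : μ^2 + c*μ - 1 = 0 := by
    have hs : Real.sqrt (c^2/4+1)^2 = c^2/4+1 := Real.sq_sqrt (by positivity)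
    rw [hμ]; nlinarith [hs]
  -- differentiability
  have hud : Differentiable ℝ u := hu.differentiable (by simp)
  have hu'd : Differentiable ℝ (deriv u) := by
    have h2 : ContDiff ℝ (∞+1) u := hu.of_le (by simp)
    exact (contDiff_succ_iff_deriv.mp h2).2.2.differentiable (by norm_num)
  -- the auxiliary functions
  set P : ℝ → ℝ := fun x => deriv u x + μ * (1 - u x) with hP
  set g : ℝ → ℝ := fun x => Real.exp (x/μ) * P x with hg
  have hPd : ∀ x, HasDerivAt P (deriv (deriv u) x - μ * deriv u x) x := by
    intro x
    have h1 := (hu'd x).hasDerivAt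
    have h2 := (((hasDerivAt_const x (1:ℝ)).sub (hud x).hasDerivAt).const_mul μ)
    have := h1.add h2
    refine this.congr_deriv ?_
    ring
  have hgd : ∀ x, HasDerivAt g
      (Real.exp (x/μ) * (P x / μ + (deriv (deriv u) x - μ * deriv u x))) x := by
    intro x
    have hid : HasDerivAt (fun y : ℝ => y / μ) (1/μ) x := (hasDerivAt_id x).div_const μ
    have he : HasDerivAt (fun y : ℝ => Real.exp (y/μ)) (Real.exp (x/μ) * (1/μ)) x :=
      hid.exp
    have := he.mul (hPd x)
    refine this.congr_deriv ?_
    ring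
  -- the derivative of g is nonnegative
  have hg' : ∀ x, 0 ≤ Real.exp (x/μ) * (P x / μ + (deriv (deriv u) x - μ * deriv u x)) := by
    intro x
    have e1 := heq1 x
    have key : P x / μ + (deriv (deriv u) x - μ * deriv u x)
        = (1 - w x) * (1 + γ * k * u x) := by
      have h2 : deriv (deriv u) x = u x - w x + γ * k * u x * (1 - w x) - c * deriv u x := by
        linarith
      rw [h2, hP]
      field_simp
      linear_combination (-(deriv u x)) * hμeq
    rw [key]
    have h3 := (hw01 x).2
    have h4 := (hu01 x).1
    have h5 : 0 < 1 + γ * k * u x := by positivity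
    have h6 : 0 < 1 - w x := by linarith
    exact mul_nonneg (le_of_lt (Real.exp_pos _)) (le_of_lt (mul_pos h6 h5))
  -- g is monotone
  have hgmono : Monotone g := by
    apply monotone_of_deriv_nonneg
    · exact fun x => (hgd x).differentiableAt
    · intro x
      rw [(hgd x).deriv]
      exact hg' x
  -- bound on deriv u for x ≤ 0, via G x = exp(c x) * deriv u x
  set G : ℝ → ℝ := fun x => Real.exp (c*x) * deriv u x with hG
  have hGd : ∀ x, HasDerivAt G
      (Real.exp (c*x) * (u x - w x + γ * k * u x * (1 - w x))) x := by
    intro x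
    have hid : HasDerivAt (fun y : ℝ => c*y) c x := by
      simpa using (hasDerivAt_id x).const_mul c
    have he : HasDerivAt (fun y : ℝ => Real.exp (c*y)) (Real.exp (c*x) * c) x :=
      (Real.hasDerivAt_exp (c*x)).comp x hid
    have := he.mul (hu'd x).hasDerivAt
    refine this.congr_deriv ?_
    have e1 := heq1 x
    have h2 : deriv (deriv u) x = u x - w x + γ * k * u x * (1 - w x) - c * deriv u x := by
      linarith
    rw [h2]
    ring
  set M : ℝ := 1 + γ * k with hM
  have hMpos : 0 < M := by positivity
  have hGbound : ∀ x ∈ Set.Iic (0:ℝ), ‖deriv G x‖ ≤ M := by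
    intro x hx
    rw [(hGd x).deriv]
    have hu0 := hu01 x
    have hw0 := hw01 x
    have hexp : Real.exp (c*x) ≤ 1 := by
      rw [show (1:ℝ) = Real.exp 0 by simp]
      apply Real.exp_le_exp.2
      have : x ≤ 0 := hx
      nlinarith
    have hexp0 : 0 < Real.exp (c*x) := Real.exp_pos _
    have hgk : 0 < γ * k := mul_pos hγ hk
    have hf1 : u x - w x + γ * k * u x * (1 - w x) ≤ M := by
      nlinarith [mul_nonneg hgk.le (mul_nonneg hu0.1.le hw0.1.le),
        mul_nonneg hgk.le (sub_nonneg.2 hu0.2.le)]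
    have hf2 : -M ≤ u x - w x + γ * k * u x * (1 - w x) := by
      nlinarith [mul_nonneg hgk.le (mul_nonneg hu0.1.le (sub_nonneg.2 hw0.2.le))]
    rw [Real.norm_eq_abs, abs_le]
    constructor <;> nlinarith [abs_nonneg (u x - w x + γ * k * u x * (1 - w x))]
  have hGdiff : ∀ x ∈ Set.Iic (0:ℝ), DifferentiableAt ℝ G x :=
    fun x _ => (hGd x).differentiableAt
  have hGest : ∀ x ≤ (0:ℝ), ‖G x‖ ≤ ‖G 0‖ + M * (-x) := by
    intro x hx
    have := Convex.norm_image_sub_le_of_norm_deriv_le hGdiff hGbound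
      (convex_Iic (0:ℝ)) (Set.self_mem_Iic) (hx : x ∈ Set.Iic (0:ℝ))
    have h1 : ‖G x‖ - ‖G 0‖ ≤ ‖G x - G 0‖ := norm_sub_norm_le _ _
    have h2 : ‖x - (0:ℝ)‖ = -x := by
      rw [sub_zero, Real.norm_eq_abs, abs_of_nonpos hx]
    rw [h2] at this
    linarith
  -- g tends to 0 at -∞
  have hμinv : 1/μ - c = μ := by field_simp; linarith
  have hgsplit : ∀ x, g x = Real.exp (μ*x) * G x + μ * (Real.exp (x/μ) * (1 - u x)) := by
    intro x
    rw [hg, hP, hG]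
    have : Real.exp (μ*x) * Real.exp (c*x) = Real.exp (x/μ) := by
      rw [← Real.exp_add]
      congr 1
      have : μ * x + c * x = (μ + c) * x := by ring
      rw [this]
      field_simp
      linear_combination x * hμeq
    linear_combination (-(deriv u x)) * this
  have hg0 : Tendsto g atBot (nhds 0) := by
    have hterm1 : Tendsto (fun x => Real.exp (μ*x) * G x) atBot (nhds 0) := by
      apply squeeze_zero_norm' (a := fun x => Real.exp (μ*x) * (‖G 0‖ + M * (-x)))
      · filter_upwards [eventually_le_atBot (0:ℝ)] with x hx
        rw [norm_mul, Real.norm_eq_abs (Real.exp _), abs_of_pos (Real.exp_pos _)]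
        exact mul_le_mul_of_nonneg_left (hGest x hx) (Real.exp_pos _).le
      · exact stmt_5_aux μ ‖G 0‖ M hμpos
    have hterm2 : Tendsto (fun x => μ * (Real.exp (x/μ) * (1 - u x))) atBot (nhds 0) := by
      apply squeeze_zero_norm' (a := fun x => Real.exp ((1/μ)*x) * (μ + 0 * (-x)))
      · filter_upwards with x
        have hu0 := hu01 x
        have he : 0 < Real.exp (x/μ) := Real.exp_pos _
        have hx : (1/μ) * x = x/μ := by ring
        rw [hx, norm_mul, norm_mul, Real.norm_eq_abs μ, abs_of_pos hμpos,
          Real.norm_eq_abs (Real.exp _), abs_of_pos he, Real.norm_eq_abs, abs_of_pos (by linarith)]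
        nlinarith [mul_nonneg (mul_pos hμpos he).le hu0.1.le]
      · exact stmt_5_aux (1/μ) μ 0 (by positivity)
    have := hterm1.add hterm2
    simp only [add_zero] at this
    exact this.congr fun x => (hgsplit x).symm
  -- conclusion
  intro x
  have hgx : 0 ≤ g x := by
    have hev : ∀ᶠ y in atBot, g y ≤ g x :=
      eventually_atBot.2 ⟨x, fun y hy => hgmono hy⟩
    exact le_of_tendsto hg0 hev
  have hPx : 0 ≤ P x := by
    by_contra hneg
    push_neg at hneg
    have := mul_neg_of_pos_of_neg (Real.exp_pos (x/μ)) hneg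
    rw [hg] at hgx
    simp only at hgx
    linarith
  rw [hP] at hPx
  simp only at hPx
  linarith
end

section
/- Let (c,u,w) be a monotone travelling wave for the reaction–diffusion system and let ν > 0 be the positive root of ν² - cν - (1+γk) = 0. Then u'(x) ≥ -ν u(x) for all x ∈ ℝ. -/
theorem stmt_6 (γ k c : ℝ) (hγ : 0 < γ) (hk : 0 < k) (hc : 0 < c)
    (u w : ℝ → ℝ) (hu : ContDiff ℝ (⊤ : ℕ∞) u) (hw : ContDiff ℝ (⊤ : ℕ∞) w)
    (hu01 : ∀ x, 0 < u x ∧ u x < 1) (hw01 : ∀ x, 0 < w x ∧ w x < 1)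
    (hu' : ∀ x, deriv u x < 0) (hw' : ∀ x, deriv w x < 0)
    (huB : Filter.Tendsto u Filter.atBot (nhds 1)) (huT : Filter.Tendsto u Filter.atTop (nhds 0))
    (hwB : Filter.Tendsto w Filter.atBot (nhds 1)) (hwT : Filter.Tendsto w Filter.atTop (nhds 0))
    (heq1 : ∀ x, deriv (deriv u) x + c * deriv u x - u x + w x - γ * k * u x * (1 - w x) = 0)
    (heq2 : ∀ x, c * deriv w x + k * u x * (1 - w x) = 0)
    (ν : ℝ) (hν : ν = c/2 + Real.sqrt (c^2/4 + 1 + γ * k)) :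
    ∀ x, deriv u x ≥ -ν * u x := by
  have harg : (0:ℝ) ≤ c^2/4 + 1 + γ * k := by positivity
  have hs : Real.sqrt (c^2/4 + 1 + γ * k) ^ 2 = c^2/4 + 1 + γ * k := Real.sq_sqrt harg
  have hsnn : (0:ℝ) ≤ Real.sqrt (c^2/4 + 1 + γ * k) := Real.sqrt_nonneg _
  have hν2 : ν^2 - c*ν - (1 + γ*k) = 0 := by subst hν; nlinarith [hs]
  have hνc : c < ν := by
    subst hν
    nlinarith [hs, hsnn, mul_pos hγ hk, sq_nonneg (Real.sqrt (c^2/4 + 1 + γ*k) - c/2)]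
  have hud : Differentiable ℝ u := hu.differentiable (by simp)
  have huinf : ContDiff ℝ (⊤ : ℕ∞) u := hu.of_le (by simp)
  have hu'd : Differentiable ℝ (deriv u) :=
    ((contDiff_infty_iff_deriv.mp huinf).2).differentiable (by simp)
  set v : ℝ → ℝ := fun x => deriv u x + ν * u x with hvdef
  have hvd : Differentiable ℝ v := hu'd.add (hud.const_mul ν)
  have hv' : ∀ x, deriv v x = (ν - c) * v x - (w x + γ * k * u x * w x) := by
    intro x
    have hd : deriv v x = deriv (deriv u) x + ν * deriv u x := by
      rw [hvdef]; exact ((hu'd x).hasDerivAt.add ((hud x).hasDerivAt.const_mul ν)).deriv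
    rw [hd, hvdef]
    linear_combination heq1 x - u x * hν2
  intro x₀
  by_contra hcon
  have hv0 : v x₀ < 0 := by
    have : v x₀ = deriv u x₀ + ν * u x₀ := rfl
    push_neg at hcon
    linarith
  -- g = exp(-(ν-c)x) * v x is nonincreasing on [x₀, ∞)
  set g : ℝ → ℝ := fun x => Real.exp (-(ν - c) * x) * v x with hgdef
  have hgD : ∀ x, HasDerivAt g (Real.exp (-(ν - c) * x) * (-(w x + γ * k * u x * w x))) x := by
    intro x
    have he : HasDerivAt (fun y : ℝ => -(ν - c) * y) (-(ν - c)) x := by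
      simpa using (hasDerivAt_id x).const_mul (-(ν - c))
    have hexp := he.exp
    have hvx : HasDerivAt v (deriv v x) x := (hvd x).hasDerivAt
    have := hexp.mul hvx
    refine this.congr_deriv ?_
    rw [hv' x]
    ring
  have hganti : AntitoneOn g (Set.Ici x₀) := by
    apply antitoneOn_of_deriv_nonpos (convex_Ici x₀)
    · exact fun x _ => ((hgD x).continuousAt).continuousWithinAt
    · exact fun x _ => ((hgD x).differentiableAt).differentiableWithinAt
    · intro x _
      rw [(hgD x).deriv]
      have hwp := (hw01 x).1
      have hup := (hu01 x).1
      have h1 : 0 < w x + γ * k * u x * w x := by positivity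
      nlinarith [Real.exp_pos (-(ν - c) * x)]
  have hvle : ∀ x ∈ Set.Ici x₀, v x ≤ v x₀ := by
    intro x hx
    have h1 : g x ≤ g x₀ := hganti (Set.self_mem_Ici) hx (by exact hx)
    have hg1 : g x = Real.exp (-(ν - c) * x) * v x := rfl
    have hg2 : g x₀ = Real.exp (-(ν - c) * x₀) * v x₀ := rfl
    rw [hg1, hg2] at h1
    have emono : Real.exp (-(ν - c) * x) ≤ Real.exp (-(ν - c) * x₀) := by
      apply Real.exp_le_exp.mpr
      have : x₀ ≤ x := hx
      nlinarith
    have key : (Real.exp (-(ν - c) * x₀) - Real.exp (-(ν - c) * x)) * v x₀ ≤ 0 :=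
      mul_nonpos_of_nonneg_of_nonpos (by linarith) (le_of_lt hv0)
    nlinarith [Real.exp_pos (-(ν - c) * x)]
  -- hence u' ≤ v x₀ < 0 on [x₀,∞), so u decreases linearly below 0
  have hν0 : 0 < ν := lt_trans hc hνc
  obtain ⟨a, ha⟩ : ∃ a, a = v x₀ := ⟨_, rfl⟩
  have ha0 : a < 0 := ha ▸ hv0
  have hder_le : ∀ x ∈ Set.Ici x₀, deriv u x ≤ a := by
    intro x hx
    have h1 : v x ≤ v x₀ := hvle x hx
    have e : v x = deriv u x + ν * u x := rfl
    have hup := (hu01 x).1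
    rw [e] at h1
    nlinarith [mul_pos hν0 hup]
  set t : ℝ := x₀ + (u x₀ + 1) / (-a) with htdef
  have htx : x₀ ≤ t := by
    have : 0 < (u x₀ + 1) / (-a) :=
      div_pos (by linarith [(hu01 x₀).1]) (by linarith)
    rw [htdef]; linarith
  have hhanti : AntitoneOn (fun x => u x - a * x) (Set.Ici x₀) := by
    apply antitoneOn_of_deriv_nonpos (convex_Ici x₀)
    · exact (hud.sub (differentiable_id.const_mul _)).continuous.continuousOn
    · exact ((hud.sub (differentiable_id.const_mul _)).differentiableOn)
    · intro x hx
      rw [interior_Ici] at hx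
      have hD : HasDerivAt (fun y => u y - a * y) (deriv u x - a) x := by
        have h2 : HasDerivAt (fun y : ℝ => a * y) a x := by
          simpa using (hasDerivAt_id x).const_mul a
        exact (hud x).hasDerivAt.sub h2
      rw [hD.deriv]
      have := hder_le x (Set.mem_Ici.mpr (le_of_lt (Set.mem_Ioi.mp hx)))
      linarith
  have hfin : u t - a * t ≤ u x₀ - a * x₀ := hhanti Set.self_mem_Ici htx htx
  have hane : a ≠ 0 := ne_of_lt ha0
  have hts : a * (t - x₀) = -(u x₀ + 1) := by
    rw [htdef, add_sub_cancel_left]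
    rw [div_neg, mul_neg, mul_div_assoc', mul_comm, mul_div_assoc, div_self hane]
    ring
  have : u t ≤ -1 := by nlinarith [hfin, hts]
  linarith [(hu01 t).1]
end

section
/- Let γ > 0, c > 0, α = -c/2 + √(c²/4+1), β = 1 - α/(γc), and c_∞ = 1/√(γ(1+γ)). Then β ≥ 0 if and only if c ≥ c_∞. -/
/-! α is the positive root of `x ↦ x² + c x - 1`, which is increasing on `[0, ∞)`, so
`β ≥ 0 ↔ α ≤ γ c ↔ (γ c)² + c (γ c) ≥ 1 ↔ γ (1 + γ) c² ≥ 1 ↔ c ≥ c_∞`. -/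

lemma neg_half_add_sqrt_le_iff {c t : ℝ} (h : 0 ≤ t + c / 2) :
    -c / 2 + Real.sqrt (c ^ 2 / 4 + 1) ≤ t ↔ 1 ≤ t ^ 2 + c * t := by
  calc -c / 2 + Real.sqrt (c ^ 2 / 4 + 1) ≤ t
      ↔ Real.sqrt (c ^ 2 / 4 + 1) ≤ t + c / 2 := by constructor <;> intro <;> linarith
    _ ↔ c ^ 2 / 4 + 1 ≤ (t + c / 2) ^ 2 := Real.sqrt_le_left h
    _ ↔ 1 ≤ t ^ 2 + c * t := by constructor <;> intro <;> linarith

lemma one_div_sqrt_le_iff {a c : ℝ} (ha : 0 < a) (hc : 0 < c) :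
    1 / Real.sqrt a ≤ c ↔ 1 ≤ a * c ^ 2 := by
  calc 1 / Real.sqrt a ≤ c
      ↔ 1 ≤ c * Real.sqrt a := div_le_iff₀ (Real.sqrt_pos.mpr ha)
    _ ↔ 1 ≤ Real.sqrt (a * c ^ 2) := by
      rw [Real.sqrt_mul ha.le, Real.sqrt_sq hc.le, mul_comm]
    _ ↔ 1 ≤ a * c ^ 2 := Real.one_le_sqrt

theorem stmt_9 (γ c : ℝ) (hγ : 0 < γ) (hc : 0 < c)
    (α β cinf : ℝ) (hα : α = -c/2 + Real.sqrt (c^2/4 + 1))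
    (hβ : β = 1 - α / (γ * c)) (hcinf : cinf = 1 / Real.sqrt (γ * (1 + γ))) :
    0 ≤ β ↔ cinf ≤ c := by
  have hγc : 0 < γ * c := mul_pos hγ hc
  calc 0 ≤ β
      ↔ α ≤ γ * c := by rw [hβ, sub_nonneg, div_le_one hγc]
    _ ↔ 1 ≤ (γ * c) ^ 2 + c * (γ * c) := by
      rw [hα]; exact neg_half_add_sqrt_le_iff (by positivity)
    _ ↔ 1 ≤ γ * (1 + γ) * c ^ 2 := by ring_nf
    _ ↔ cinf ≤ c := by rw [hcinf, one_div_sqrt_le_iff (by positivity) hc]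
end

section
/- Let γ, k > 0 and let λ_lin < 0 and c_lin > 0 satisfy 3λ_lin² + 2λ_lin c_lin - (1+γk) = 0 and λ_lin³ + c_lin λ_lin² - (1+γk)λ_lin - k/c_lin = 0. Then 3λ_lin² = -(1+γk) + 2√((1+γk)² + 3k) and λ_lin c_lin = (1+γk) - √((1+γk)² + 3k). -/
/-! With `u = λc` and `a = 1 + γk`, multiplying the cubic by `c` and using the derivative relation
`3λ² = a - 2u` to remove `λ³c = u λ²` leaves the quadratic `u² - 2au - 3k = 0`. Its roots are
`a ± √(a² + 3k)`, and `u < 0` selects the smaller one; then `3λ² = a - 2u` gives the first identity. -/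

theorem sq_sub_two_mul_sub_eq_zero_of_critical {a k lam c : ℝ} (hc : c ≠ 0)
    (h1 : 3 * lam ^ 2 + 2 * lam * c - a = 0)
    (h2 : lam ^ 3 + c * lam ^ 2 - a * lam - k / c = 0) :
    (lam * c) ^ 2 - 2 * a * (lam * c) - 3 * k = 0 := by
  have hcubic : lam ^ 3 * c + (lam * c) ^ 2 - a * (lam * c) - k = 0 := by
    field_simp at h2
    linear_combination h2
  linear_combination 3 * hcubic - lam * c * h1

theorem eq_sub_sqrt_of_sq_sub_two_mul_sub_eq_zero {a b u : ℝ} (hb : 0 ≤ b) (hu : u < 0)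
    (h : u ^ 2 - 2 * a * u - b = 0) : u = a - √(a ^ 2 + b) := by
  set s := √(a ^ 2 + b)
  have hs : s ^ 2 = a ^ 2 + b := Real.sq_sqrt (by positivity)
  have has : 0 ≤ a + s := by
    have : |a| ≤ s := Real.abs_le_sqrt (by linarith)
    linarith [neg_abs_le a]
  have hroots : (u - (a - s)) * (u - (a + s)) = 0 := by linear_combination h - hs
  rcases mul_eq_zero.1 hroots with h' | h' <;> linarith

theorem stmt_12_general (γ k lamLin cLin : ℝ) (hk : 0 < k)
    (hlam : lamLin < 0) (hc : 0 < cLin)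
    (h1 : 3 * lamLin^2 + 2 * lamLin * cLin - (1 + γ * k) = 0)
    (h2 : lamLin^3 + cLin * lamLin^2 - (1 + γ * k) * lamLin - k / cLin = 0) :
    3 * lamLin^2 = -(1 + γ * k) + 2 * Real.sqrt ((1 + γ * k)^2 + 3 * k) ∧
    lamLin * cLin = (1 + γ * k) - Real.sqrt ((1 + γ * k)^2 + 3 * k) := by
  have hquad := sq_sub_two_mul_sub_eq_zero_of_critical hc.ne' h1 h2
  have hu := eq_sub_sqrt_of_sq_sub_two_mul_sub_eq_zero (by positivity)
    (mul_neg_of_neg_of_pos hlam hc) hquad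
  exact ⟨by linear_combination h1 - 2 * hu, hu⟩

theorem stmt_12 (γ k lamLin cLin : ℝ) (hγ : 0 < γ) (hk : 0 < k)
    (hlam : lamLin < 0) (hc : 0 < cLin)
    (h1 : 3 * lamLin^2 + 2 * lamLin * cLin - (1 + γ * k) = 0)
    (h2 : lamLin^3 + cLin * lamLin^2 - (1 + γ * k) * lamLin - k / cLin = 0) :
    3 * lamLin^2 = -(1 + γ * k) + 2 * Real.sqrt ((1 + γ * k)^2 + 3 * k) ∧
    lamLin * cLin = (1 + γ * k) - Real.sqrt ((1 + γ * k)^2 + 3 * k) :=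
  stmt_12_general γ k lamLin cLin hk hlam hc h1 h2
end
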